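/- Let s ≥ 3 and suppose real sequences (λ_k)_{k=0}^{s}, (μ_k)_{k=0}^{s} satisfy: (Δλ_{k₁})(Δ²λ_{k₂}) + (Δλ_{k₂})(Δ²λ_{k₁}) = 0 for all 0 ≤ k₁,k₂ ≤ s−2, where Δλ_k = λ_{k+1} − λ_k and Δ²λ_k = λ_{k+2} − 2λ_{k+1} + λ_k. Then Δ²λ_k = 0 for all 0 ≤ k ≤ s−3; i.e., λ_0, …, λ_{s−1} form an arithmetic progression. -/
import Mathlib

theorem second_difference_vanishes (s : ℕ) (hs : 3 ≤ s) (l : ℕ → ℝ)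
    (h : ∀ k1 k2 : ℕ, k1 ≤ s - 2 → k2 ≤ s - 2 →
      (l (k1 + 1) - l k1) * (l (k2 + 2) - 2 * l (k2 + 1) + l k2)
        + (l (k2 + 1) - l k2) * (l (k1 + 2) - 2 * l (k1 + 1) + l k1) = 0) :
    ∀ k : ℕ, k ≤ s - 3 → l (k + 2) - 2 * l (k + 1) + l k = 0 := by
  intro k hk
  have hk2 : k ≤ s - 2 := by omega
  have hk1 : k + 1 ≤ s - 2 := by omega
  have h1 := h k k hk2 hk2
  have h2 := h k (k + 1) hk2 hk1
  rcases eq_or_ne (l (k + 1) - l k) 0 with hd | hd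
  · -- then l (k+1) = l k, and h2 gives D^2 = 0
    have hD : (l (k + 2) - 2 * l (k + 1) + l k) * (l (k + 2) - 2 * l (k + 1) + l k) = 0 := by
      have hl : l (k + 1) = l k := by linarith
      simp only [show k+1+1 = k+2 from rfl, show k+1+2 = k+3 from rfl, hd] at h2
      nlinarith [h2]
    have := mul_self_eq_zero.mp hD
    linarith
  · have hmul : (l (k + 1) - l k) * (l (k + 2) - 2 * l (k + 1) + l k) = 0 := by linarith
    rcases mul_eq_zero.mp hmul with h' | h'
    · exact absurd h' hd
    · exact h'
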